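/- arXiv:1907.05697 — 2 statements merged into one kernel-verified Lean document; each statement's English description precedes it below -/
import Mathlib

section
/- Under the hypotheses of the preceding approximation result, if additionally s* = λs for some λ > 0 and some s ∈ M₀, then there exists a_{s*} ∈ A with |R^M(s*) − ⟨s*, a_{s*}⟩| ≤ min over all λ > 0 with s*/λ ∈ M₀ of (|λ−1|/λ)·(100‖s*‖_∞ + εK‖s*‖₂). -/
/-!
Choose the admissible scaling `μ • s*` of `s*` inside `M₀` with `|1 - μ|` minimal (it exists by
compactness, and `μ > 0` because `0 ∉ M₀`), and take `a_{s*}` to be the vector representing `R`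
at `s₁ = μ • s*`. Since `s₁` is a positive multiple of `s*`, the angular part `Θ` of `d_ε` does
not see the difference between `s*` and `s₁`, so the McShane extension at `s*` lies within
`K ε ‖s* - s₁‖₂` of `R s₁`, while `|R s₁ - ⟨s*, a⟩| = |⟨s₁ - s*, a⟩| ≤ 100 ‖s₁ - s*‖_∞`.
Both distances are `|1 - μ|` times the corresponding norm of `s*`, and `|1 - μ| ≤ |λ - 1| / λ`
for every admissible `λ`.
-/

noncomputable def Theta {n : ℕ} (s₁ s₂ : EuclideanSpace ℝ (Fin n)) : ℝ :=
  Real.arccos ((inner ℝ s₁ s₂ : ℝ) / (‖s₁‖ * ‖s₂‖)) / Real.pi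

noncomputable def dE {n : ℕ} (ε : ℝ) (s₁ s₂ : EuclideanSpace ℝ (Fin n)) : ℝ :=
  Theta s₁ s₂ + ε * ‖s₁ - s₂‖

open scoped RealInnerProductSpace

noncomputable def mcShaneExtension {X : Type*} (d : X → X → ℝ) (K : ℝ) (M : Set X)
    (f : X → ℝ) (x : X) : ℝ :=
  sSup ((fun t => f t - K * d x t) '' M)

theorem abs_mcShaneExtension_sub_le {X : Type*} {d : X → X → ℝ} {K δ : ℝ} {M : Set X}
    {f : X → ℝ} (hK : 0 ≤ K) (hf : ∀ s ∈ M, ∀ t ∈ M, |f s - f t| ≤ K * d s t)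
    {x y : X} (hy : y ∈ M) (hdy : ∀ t ∈ M, d t y ≤ d x t + δ) (hxy : d x y ≤ δ) :
    |mcShaneExtension d K M f x - f y| ≤ K * δ := by
  have hub : ∀ t ∈ M, f t - K * d x t ≤ f y + K * δ := fun t ht => by
    have hft : f t - f y ≤ K * d t y := (abs_le.mp (hf t ht y hy)).2
    nlinarith [mul_le_mul_of_nonneg_left (hdy t ht) hK]
  have hbdd : BddAbove ((fun t => f t - K * d x t) '' M) := by
    refine ⟨f y + K * δ, ?_⟩
    rintro _ ⟨t, ht, rfl⟩
    exact hub t ht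
  have hle : mcShaneExtension d K M f x ≤ f y + K * δ := by
    refine csSup_le ⟨_, y, hy, rfl⟩ ?_
    rintro _ ⟨t, ht, rfl⟩
    exact hub t ht
  have hge : f y - K * d x y ≤ mcShaneExtension d K M f x := le_csSup hbdd ⟨y, hy, rfl⟩
  rw [abs_le]
  constructor <;> nlinarith [mul_le_mul_of_nonneg_left hxy hK]

theorem exists_pos_smul_mem_forall_abs_one_sub_le {E : Type*} [NormedAddCommGroup E]
    [NormedSpace ℝ E] {M : Set E} (hM : IsCompact M) (h0 : ∀ x ∈ M, x ≠ 0) {s : E}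
    (hs : s ≠ 0) (hscaled : ∃ μ : ℝ, 0 < μ ∧ μ • s ∈ M) :
    ∃ μ₀ : ℝ, 0 < μ₀ ∧ μ₀ • s ∈ M ∧ ∀ μ : ℝ, 0 ≤ μ → μ • s ∈ M → |1 - μ₀| ≤ |1 - μ| := by
  obtain ⟨μ, hμ, hμM⟩ := hscaled
  have hS : IsCompact ((fun μ : ℝ => μ • s) ⁻¹' M ∩ Set.Ici 0) :=
    ((isClosedEmbedding_smul_left hs).isCompact_preimage hM).inter_right isClosed_Ici
  obtain ⟨μ₀, ⟨hμ₀M, hμ₀⟩, hmin⟩ := hS.exists_isMinOn ⟨μ, hμM, hμ.le⟩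
    (f := fun μ : ℝ => |1 - μ|) (by fun_prop)
  have hμ₀ne : μ₀ ≠ 0 := by
    rintro rfl
    exact h0 _ hμ₀M (zero_smul ℝ s)
  exact ⟨μ₀, hμ₀.lt_of_ne' hμ₀ne, hμ₀M, fun μ hμ hμM => hmin ⟨hμM, hμ⟩⟩

theorem abs_inner_le_sup_norm_mul_sum_abs {n : ℕ} (v a : EuclideanSpace ℝ (Fin n)) :
    |⟪v, a⟫| ≤ ‖WithLp.equiv 2 (Fin n → ℝ) v‖ * ∑ i, |a i| := by
  rw [PiLp.inner_apply, Finset.mul_sum]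
  refine (Finset.abs_sum_le_sum_abs _ _).trans (Finset.sum_le_sum fun i _ => ?_)
  rw [RCLike.inner_apply, conj_trivial, abs_mul, mul_comm]
  gcongr
  exact norm_le_pi_norm (WithLp.equiv 2 (Fin n → ℝ) v) i

theorem norm_sub_smul_self {E : Type*} [SeminormedAddCommGroup E] [NormedSpace ℝ E]
    (μ : ℝ) (s : E) : ‖s - μ • s‖ = |1 - μ| * ‖s‖ := by
  rw [← Real.norm_eq_abs, ← norm_smul, sub_smul, one_smul]

theorem abs_one_sub_inv {lam : ℝ} (hlam : 0 < lam) : |1 - lam⁻¹| = |lam - 1| / lam := by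
  rw [show 1 - lam⁻¹ = (lam - 1) / lam by field_simp, abs_div, abs_of_pos hlam]

section Theta

variable {n : ℕ}

theorem Theta_comm (s t : EuclideanSpace ℝ (Fin n)) : Theta s t = Theta t s := by
  rw [Theta, Theta, real_inner_comm, mul_comm ‖s‖]

theorem Theta_smul_left {μ : ℝ} (hμ : 0 < μ) (s t : EuclideanSpace ℝ (Fin n)) :
    Theta (μ • s) t = Theta s t := by
  rw [Theta, Theta, real_inner_smul_left, norm_smul, Real.norm_eq_abs, abs_of_pos hμ, mul_assoc,
    mul_div_mul_left _ _ hμ.ne']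

theorem Theta_self {s : EuclideanSpace ℝ (Fin n)} (hs : s ≠ 0) : Theta s s = 0 := by
  have hs' : ‖s‖ * ‖s‖ ≠ 0 := mul_ne_zero (norm_ne_zero_iff.mpr hs) (norm_ne_zero_iff.mpr hs)
  rw [Theta, real_inner_self_eq_norm_mul_norm, div_self hs', Real.arccos_one, zero_div]

theorem dE_smul_self {ε μ : ℝ} (hμ : 0 < μ) {s : EuclideanSpace ℝ (Fin n)} (hs : s ≠ 0) :
    dE ε s (μ • s) = ε * ‖s - μ • s‖ := by
  rw [dE, Theta_comm, Theta_smul_left hμ, Theta_self hs, zero_add]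

theorem dE_smul_right_le {ε μ : ℝ} (hε : 0 ≤ ε) (hμ : 0 < μ) (s t : EuclideanSpace ℝ (Fin n)) :
    dE ε t (μ • s) ≤ dE ε s t + ε * ‖s - μ • s‖ := by
  have htri : ‖t - μ • s‖ ≤ ‖s - t‖ + ‖s - μ • s‖ := by
    rw [norm_sub_rev s t]
    exact norm_sub_le_norm_sub_add_norm_sub t s (μ • s)
  rw [dE, dE, Theta_comm, Theta_smul_left hμ, Theta_comm]
  nlinarith [mul_le_mul_of_nonneg_left htri hε]

end Theta

theorem mcshane_duality_bound_scaled_general {n : ℕ} (ε : ℝ) (hε : 0 < ε)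
    (M₀ A : Set (EuclideanSpace ℝ (Fin n)))
    (hcomp : IsCompact M₀) (h0 : ∀ s ∈ M₀, s ≠ 0)
    (hA : ∀ a ∈ A, (∀ i, 0 ≤ a i) ∧ ∑ i, a i = 100)
    (R : EuclideanSpace ℝ (Fin n) → ℝ) (K : ℝ) (hK : 0 ≤ K)
    (hLip : ∀ s ∈ M₀, ∀ t ∈ M₀, |R s - R t| ≤ K * dE ε s t)
    (hRep : ∀ s ∈ M₀, ∃ a ∈ A, R s = (inner ℝ s a : ℝ))
    (sstar : EuclideanSpace ℝ (Fin n)) (hs : sstar ≠ 0)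
    (hscaled : ∃ lam : ℝ, 0 < lam ∧ lam⁻¹ • sstar ∈ M₀) :
    ∃ astar ∈ A, ∀ lam : ℝ, 0 < lam → lam⁻¹ • sstar ∈ M₀ →
      |sSup ((fun t => R t - K * dE ε sstar t) '' M₀) - (inner ℝ sstar astar : ℝ)| ≤
        (|lam - 1| / lam) *
          (100 * ‖(WithLp.equiv 2 (Fin n → ℝ)) sstar‖ + ε * K * ‖sstar‖) := by
  obtain ⟨lam₀, hlam₀, hlam₀M⟩ := hscaled
  obtain ⟨μ, hμ, hμM, hμmin⟩ := exists_pos_smul_mem_forall_abs_one_sub_le hcomp h0 hs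
    ⟨lam₀⁻¹, inv_pos.mpr hlam₀, hlam₀M⟩
  obtain ⟨a, haA, hRa⟩ := hRep _ hμM
  obtain ⟨ha, ha_sum⟩ := hA a haA
  refine ⟨a, haA, fun lam hlam hlamM => ?_⟩
  have hext : |mcShaneExtension (dE ε) K M₀ R sstar - R (μ • sstar)| ≤
      K * (ε * ‖sstar - μ • sstar‖) :=
    abs_mcShaneExtension_sub_le hK hLip hμM (fun t _ => dE_smul_right_le hε.le hμ sstar t)
      (dE_smul_self hμ hs).le
  have hrep : |R (μ • sstar) - ⟪sstar, a⟫| ≤ |1 - μ| * (100 * ‖WithLp.equiv 2 _ sstar‖) := by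
    have habs_sum : ∑ i, |a i| = 100 := by simp only [abs_of_nonneg (ha _), ha_sum]
    calc |R (μ • sstar) - ⟪sstar, a⟫| = |⟪sstar - μ • sstar, a⟫| := by
          rw [hRa, inner_sub_left, abs_sub_comm]
      _ ≤ ‖WithLp.equiv 2 _ sstar - μ • WithLp.equiv 2 _ sstar‖ * ∑ i, |a i| :=
          abs_inner_le_sup_norm_mul_sum_abs _ _
      _ = _ := by rw [norm_sub_smul_self, habs_sum]; ring
  have hbest : |1 - μ| ≤ |lam - 1| / lam :=
    abs_one_sub_inv hlam ▸ hμmin _ (inv_pos.mpr hlam).le hlamM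
  calc _ ≤ |mcShaneExtension (dE ε) K M₀ R sstar - R (μ • sstar)| +
        |R (μ • sstar) - ⟪sstar, a⟫| := abs_sub_le _ _ _
    _ ≤ |1 - μ| * (100 * ‖WithLp.equiv 2 _ sstar‖ + ε * K * ‖sstar‖) := by
      rw [norm_sub_smul_self] at hext
      linarith
    _ ≤ _ := by gcongr

theorem mcshane_duality_bound_scaled {n : ℕ} (ε : ℝ) (hε : 0 < ε)
    (M₀ A : Set (EuclideanSpace ℝ (Fin n)))
    (hcomp : IsCompact M₀) (hne : M₀.Nonempty) (h0 : ∀ s ∈ M₀, s ≠ 0)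
    (hA : ∀ a ∈ A, (∀ i, 0 ≤ a i) ∧ ∑ i, a i = 100)
    (R : EuclideanSpace ℝ (Fin n) → ℝ) (K : ℝ) (hK : 0 ≤ K)
    (hLip : ∀ s ∈ M₀, ∀ t ∈ M₀, |R s - R t| ≤ K * dE ε s t)
    (hRep : ∀ s ∈ M₀, ∃ a ∈ A, R s = (inner ℝ s a : ℝ))
    (sstar : EuclideanSpace ℝ (Fin n)) (hs : sstar ≠ 0)
    (hscaled : ∃ lam : ℝ, 0 < lam ∧ lam⁻¹ • sstar ∈ M₀) :
    ∃ astar ∈ A, ∀ lam : ℝ, 0 < lam → lam⁻¹ • sstar ∈ M₀ →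
      |sSup ((fun t => R t - K * dE ε sstar t) '' M₀) - (inner ℝ sstar astar : ℝ)| ≤
        (|lam - 1| / lam) *
          (100 * ‖(WithLp.equiv 2 (Fin n → ℝ)) sstar‖ + ε * K * ‖sstar‖) :=
  mcshane_duality_bound_scaled_general ε hε M₀ A hcomp h0 hA R K hK hLip hRep sstar hs hscaled
end

section
/- Lower bound for representation error: let M₀ ⊆ ℝⁿ \ {0} be compact, ε > 0, R : M₀ → ℝ K-Lipschitz w.r.t. d_ε = Θ + εE, and R^M its McShane extension. If s* ∈ M \ M₀ and a ∈ ℝⁿ satisfy ⟨s*, a⟩ ≥ R(s) for all s ∈ M₀, then |⟨s*, a⟩ − R^M(s*)| ≥ K·( Θ(s*, M₀) + ε·E(s*, M₀) ), where Θ(s*,M₀) = inf_{s∈M₀} Θ(s*,s) and E(s*,M₀) = inf_{s∈M₀} ‖s*−s‖₂. -/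
/-! Every term `R t - K * d_ε(s*, t)` of the McShane supremum is at most
`⟨s*, a⟩ - K * (Θ(s*, M₀) + ε E(s*, M₀))`, because `R t ≤ ⟨s*, a⟩` and `d_ε(s*, t)` dominates
the sum of the two infima; hence so is the supremum itself. -/

open Set

lemma Theta_nonneg {n : ℕ} (s₁ s₂ : EuclideanSpace ℝ (Fin n)) : 0 ≤ Theta s₁ s₂ :=
  div_nonneg (Real.arccos_nonneg _) Real.pi_pos.le

lemma csInf_image_le_of_nonneg {α : Type*} {s : Set α} {f : α → ℝ} (hf : ∀ t, 0 ≤ f t)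
    {t : α} (ht : t ∈ s) : sInf (f '' s) ≤ f t :=
  csInf_le ⟨0, by rintro _ ⟨u, -, rfl⟩; exact hf u⟩ (mem_image_of_mem f ht)

lemma sInf_Theta_add_mul_sInf_norm_sub_le_dE {n : ℕ} {ε : ℝ} (hε : 0 ≤ ε)
    {M : Set (EuclideanSpace ℝ (Fin n))} {x t : EuclideanSpace ℝ (Fin n)} (ht : t ∈ M) :
    sInf ((fun s => Theta x s) '' M) + ε * sInf ((fun s => ‖x - s‖) '' M) ≤ dE ε x t :=
  add_le_add (csInf_image_le_of_nonneg (Theta_nonneg x) ht)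
    (mul_le_mul_of_nonneg_left (csInf_image_le_of_nonneg (fun _ => norm_nonneg _) ht) hε)

lemma sSup_image_sub_mul_le {α : Type*} {s : Set α} (hs : s.Nonempty) {R d : α → ℝ}
    {K b c : ℝ} (hK : 0 ≤ K) (hR : ∀ t ∈ s, R t ≤ b) (hd : ∀ t ∈ s, c ≤ d t) :
    sSup ((fun t => R t - K * d t) '' s) ≤ b - K * c := by
  refine csSup_le (hs.image _) ?_
  rintro _ ⟨t, ht, rfl⟩
  linarith [hR t ht, mul_le_mul_of_nonneg_left (hd t ht) hK]

theorem mcshane_lower_bound_general {n : ℕ} (ε : ℝ) (hε : 0 < ε)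
    (M₀ : Set (EuclideanSpace ℝ (Fin n)))
    (hne : M₀.Nonempty)
    (R : EuclideanSpace ℝ (Fin n) → ℝ) (K : ℝ) (hK : 0 ≤ K)
    (sstar : EuclideanSpace ℝ (Fin n))
    (a : EuclideanSpace ℝ (Fin n))
    (ha : ∀ s ∈ M₀, R s ≤ (inner ℝ sstar a : ℝ)) :
    K * (sInf ((fun s => Theta sstar s) '' M₀) +
        ε * sInf ((fun s => ‖sstar - s‖) '' M₀)) ≤
      |(inner ℝ sstar a : ℝ) - sSup ((fun t => R t - K * dE ε sstar t) '' M₀)| := by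
  have hsup := sSup_image_sub_mul_le hne hK ha
    (fun _ ht => sInf_Theta_add_mul_sInf_norm_sub_le_dE hε.le (x := sstar) ht)
  exact (le_sub_comm.mp hsup).trans (le_abs_self _)

theorem mcshane_lower_bound {n : ℕ} (ε : ℝ) (hε : 0 < ε)
    (M₀ : Set (EuclideanSpace ℝ (Fin n)))
    (hcomp : IsCompact M₀) (hne : M₀.Nonempty) (h0 : ∀ s ∈ M₀, s ≠ 0)
    (R : EuclideanSpace ℝ (Fin n) → ℝ) (K : ℝ) (hK : 0 ≤ K)
    (hLip : ∀ s ∈ M₀, ∀ t ∈ M₀, |R s - R t| ≤ K * dE ε s t)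
    (sstar : EuclideanSpace ℝ (Fin n)) (hs : sstar ≠ 0) (hs' : sstar ∉ M₀)
    (a : EuclideanSpace ℝ (Fin n))
    (ha : ∀ s ∈ M₀, R s ≤ (inner ℝ sstar a : ℝ)) :
    K * (sInf ((fun s => Theta sstar s) '' M₀) +
        ε * sInf ((fun s => ‖sstar - s‖) '' M₀)) ≤
      |(inner ℝ sstar a : ℝ) - sSup ((fun t => R t - K * dE ε sstar t) '' M₀)| :=
  mcshane_lower_bound_general ε hε M₀ hne R K hK sstar a ha
end
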